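/- arXiv:2103.08167 — 4 statements merged into one kernel-verified Lean document; each statement's English description precedes it below -/
import Mathlib

section
/- For every real number h > 0 and natural number r ≥ 1, the function φ(x) = (1 - (2x/h)^2)^r for |x| < h/2 and φ(x) = 0 otherwise satisfies (φ * φ)(0) = ∫_ℝ φ(x)^2 dx = (h/2) · √π · (2r)! / Γ(2r + 3/2). -/
/-!
Squaring `φ` doubles the exponent, so `∫ φ² = ∫_{-h/2}^{h/2} (1 - (2x/h)²)^{2r} dx`. Rescaling
to `[-1, 1]` and substituting `x = cos θ` turns this into `(h/2) ∫_0^π sin^{4r+1} θ dθ`, whose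
Wallis product is `√π · n! / Γ(n + 3/2)` with `n = 2r`, by induction through `Γ(s + 1) = s Γ(s)`.
-/

open MeasureTheory Real intervalIntegral

lemma two_mul_prod_eq_sqrt_pi_mul_factorial_div_Gamma (n : ℕ) :
    2 * ∏ i ∈ Finset.range n, (2 * (i : ℝ) + 2) / (2 * i + 3) =
      √π * n.factorial / Gamma (n + 3 / 2) := by
  induction n with
  | zero =>
    have hGamma : Gamma (3 / 2) = √π / 2 := by
      rw [show (3 / 2 : ℝ) = 1 / 2 + 1 by norm_num, Gamma_add_one (by norm_num),
        Gamma_one_half_eq]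
      ring
    have hπ : √π ≠ 0 := by positivity
    simp only [Finset.range_zero, Finset.prod_empty, Nat.factorial_zero, Nat.cast_zero,
      Nat.cast_one, zero_add, hGamma]
    field_simp
  | succ n ih =>
    have hGamma_pos : 0 < Gamma (n + 3 / 2) := Gamma_pos_of_pos (by positivity)
    have hGamma_succ : Gamma ((n + 1 : ℕ) + 3 / 2) = (n + 3 / 2) * Gamma (n + 3 / 2) := by
      rw [← Gamma_add_one (by positivity)]
      push_cast
      ring_nf
    rw [Finset.prod_range_succ, ← mul_assoc, ih, hGamma_succ, Nat.factorial_succ]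
    push_cast
    field_simp

lemma integral_one_sub_sq_pow (n : ℕ) :
    ∫ x in (-1 : ℝ)..1, (1 - x ^ 2) ^ n = √π * n.factorial / Gamma (n + 3 / 2) := by
  have hsubst := integral_sin_pow_odd_mul_cos_pow (a := 0) (b := π) n 0
  simp only [pow_zero, mul_one, one_mul, cos_zero, cos_pi] at hsubst
  rw [← hsubst, integral_sin_pow_odd, two_mul_prod_eq_sqrt_pi_mul_factorial_div_Gamma]

lemma integral_one_sub_div_sq_pow {c : ℝ} (hc : c ≠ 0) (n : ℕ) :
    ∫ x in -c..c, (1 - (x / c) ^ 2) ^ n = c * (√π * n.factorial / Gamma (n + 3 / 2)) := by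
  rw [integral_comp_div (fun x => (1 - x ^ 2) ^ n) hc, neg_div, div_self hc,
    integral_one_sub_sq_pow, smul_eq_mul]

lemma integral_ite_abs_lt {E : Type*} [NormedAddCommGroup E] [NormedSpace ℝ E]
    {c : ℝ} (hc : 0 ≤ c) (f : ℝ → E) :
    ∫ x, (if |x| < c then f x else 0) = ∫ x in -c..c, f x := by
  have hind : (fun x => if |x| < c then f x else 0) = (Set.Ioo (-c) c).indicator f := by
    ext x
    simp only [Set.indicator, Set.mem_Ioo, abs_lt]
  rw [hind, MeasureTheory.integral_indicator measurableSet_Ioo, integral_of_le (by linarith),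
    integral_Ioc_eq_integral_Ioo]

theorem convolution_phi_squared_general (h : ℝ) (hh : 0 < h) (r : ℕ)
    (φ : ℝ → ℝ)
    (hφ : ∀ x : ℝ, φ x = if |x| < h / 2 then (1 - (2 * x / h) ^ 2) ^ r else 0) :
    (∫ x : ℝ, φ x * φ (0 - x)) = (∫ x : ℝ, (φ x) ^ 2) ∧
    (∫ x : ℝ, (φ x) ^ 2) =
      (h / 2) * Real.sqrt π * (Nat.factorial (2 * r)) / Real.Gamma (2 * r + 3 / 2) := by
  have hφ_even : ∀ x, φ (0 - x) = φ x := fun x => by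
    rw [hφ, hφ, zero_sub, abs_neg, mul_neg, neg_div, neg_sq]
  have hφ_sq : ∀ x, φ x ^ 2 =
      if |x| < h / 2 then (1 - (x / (h / 2)) ^ 2) ^ (2 * r) else 0 := fun x => by
    rw [hφ]
    split_ifs <;> ring
  refine ⟨by simp_rw [hφ_even, ← sq], ?_⟩
  rw [funext hφ_sq, integral_ite_abs_lt (by positivity),
    integral_one_sub_div_sq_pow (by positivity)]
  push_cast
  ring

theorem convolution_phi_squared (h : ℝ) (hh : 0 < h) (r : ℕ) (hr : 1 ≤ r)
    (φ : ℝ → ℝ)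
    (hφ : ∀ x : ℝ, φ x = if |x| < h / 2 then (1 - (2 * x / h) ^ 2) ^ r else 0) :
    (∫ x : ℝ, φ x * φ (0 - x)) = (∫ x : ℝ, (φ x) ^ 2) ∧
    (∫ x : ℝ, (φ x) ^ 2) =
      (h / 2) * Real.sqrt π * (Nat.factorial (2 * r)) / Real.Gamma (2 * r + 3 / 2) :=
  convolution_phi_squared_general h hh r φ hφ
end

section
/- For all real x > 1/2, the Gamma function satisfies √(x - 1/2) < Γ(x + 1/2)/Γ(x) < √(x + 1/2). -/
/-! Log-convexity of Γ at the midpoint of `y` and `y + 1`, together with `Γ (y + 1) = y Γ y`,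
gives `Γ (y + 1/2) ≤ √y Γ y`. At `y = x` this is the upper bound; at `y = x + 1/2` it reads
`x Γ x ≤ √(x + 1/2) Γ (x + 1/2)`, and `x / √(x + 1/2) > √(x - 1/2)` because `x² > x² - 1/4`. -/

open Real

theorem Real.Gamma_add_half_le_sqrt_mul_Gamma {y : ℝ} (hy : 0 < y) :
    Gamma (y + 1 / 2) ≤ √y * Gamma y := by
  have h := Gamma_mul_add_mul_le_rpow_Gamma_mul_rpow_Gamma hy (by linarith : 0 < y + 1)
    one_half_pos one_half_pos (add_halves 1)
  have hΓ := (Gamma_pos_of_pos hy).le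
  calc Gamma (y + 1 / 2) = Gamma (1 / 2 * y + 1 / 2 * (y + 1)) := by ring_nf
    _ ≤ Gamma y ^ (1 / 2 : ℝ) * (y * Gamma y) ^ (1 / 2 : ℝ) := by rwa [Gamma_add_one hy.ne'] at h
    _ = √y * Gamma y := by
      rw [mul_rpow hy.le hΓ, mul_left_comm, ← rpow_add_of_nonneg hΓ one_half_pos.le one_half_pos.le,
        add_halves, rpow_one, sqrt_eq_rpow]

theorem Real.Gamma_add_half_div_Gamma_le_sqrt {x : ℝ} (hx : 0 < x) :
    Gamma (x + 1 / 2) / Gamma x ≤ √x :=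
  (div_le_iff₀ (Gamma_pos_of_pos hx)).2 (Gamma_add_half_le_sqrt_mul_Gamma hx)

theorem Real.div_sqrt_add_half_le_Gamma_add_half_div_Gamma {x : ℝ} (hx : 0 < x) :
    x / √(x + 1 / 2) ≤ Gamma (x + 1 / 2) / Gamma x := by
  have h := Gamma_add_half_le_sqrt_mul_Gamma (by linarith : 0 < x + 1 / 2)
  rw [add_assoc, add_halves, Gamma_add_one hx.ne'] at h
  rw [div_le_div_iff₀ (by positivity) (Gamma_pos_of_pos hx)]
  linarith

theorem Real.sqrt_sub_half_lt_div_sqrt_add_half {x : ℝ} (hx : 0 < x) :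
    √(x - 1 / 2) < x / √(x + 1 / 2) := by
  have hpos : 0 < √(x + 1 / 2) := by positivity
  rw [lt_div_iff₀ hpos, ← sqrt_mul' _ (by linarith), sqrt_lt' hx]
  nlinarith

theorem gautschi_wendel (x : ℝ) (hx : 1 / 2 < x) :
    Real.sqrt (x - 1 / 2) < Real.Gamma (x + 1 / 2) / Real.Gamma x ∧
    Real.Gamma (x + 1 / 2) / Real.Gamma x < Real.sqrt (x + 1 / 2) := by
  have hx₀ : 0 < x := by linarith
  exact ⟨(sqrt_sub_half_lt_div_sqrt_add_half hx₀).trans_le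
      (div_sqrt_add_half_le_Gamma_add_half_div_Gamma hx₀),
    (Gamma_add_half_div_Gamma_le_sqrt hx₀).trans_lt (sqrt_lt_sqrt hx₀.le (by linarith))⟩
end

section
/- For every natural number r ≥ 1 and real numbers h, b > 0, the quantity 2·(2r)!·Γ(r + 3/2)^2 / (Γ(2r + 3/2)·h·√π·(r!)^2) is strictly greater than √(2/π)·√r / h. -/
/-!
With `c n = (2n choose n) / 4 ^ n` one has `Γ(n + 1/2) = √π n! c n`, so `h` times the factor
equals `(2r + 1)² / (4r + 1) · c r ² / c (2r)`. Wallis' product satisfies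
`W n = 1 / ((2n + 1) c n ²)` and `(2n + 1) / (2n + 2) · π / 2 ≤ W n ≤ π / 2`; these bounds on
`c r` and `c (2r)` show that this is at least `√((2r + 1) / π)`, which exceeds `√(2r / π)`.
-/

open Real Nat

theorem Real.Gamma_nat_add_half_eq_centralBinom (n : ℕ) :
    Gamma (n + 1 / 2) = √π * n ! * (centralBinom n / 4 ^ n) := by
  induction n with
  | zero => simp [← Gamma_one_half_eq]
  | succ n ih =>
    have hrec : (centralBinom (n + 1) : ℝ) = 2 * (2 * n + 1) * centralBinom n / (n + 1) := by
      rw [eq_div_iff (by positivity), mul_comm]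
      exact_mod_cast succ_mul_centralBinom_succ n
    rw [Nat.cast_succ, add_right_comm, Gamma_add_one (by positivity), ih, factorial_succ, hrec]
    push_cast
    field_simp
    ring

theorem Nat.centralBinom_mul_factorial_mul_factorial (n : ℕ) :
    centralBinom n * n ! * n ! = (2 * n)! := by
  rw [centralBinom_eq_two_mul_choose]
  convert Nat.choose_mul_factorial_mul_factorial (show n ≤ 2 * n by omega) using 3
  omega

theorem Real.Wallis.W_eq_centralBinom (n : ℕ) :
    W n = 1 / ((2 * n + 1) * (centralBinom n / 4 ^ n) ^ 2) := by
  have h16 : (2 : ℝ) ^ (4 * n) = (4 ^ n) ^ 2 := by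
    rw [← pow_mul, pow_mul, mul_comm, pow_mul]; norm_num
  rw [W_eq_factorial_ratio, ← Nat.centralBinom_mul_factorial_mul_factorial, h16]
  have := n.factorial_pos
  have := n.centralBinom_pos
  push_cast
  field_simp

theorem two_div_pi_mul_le_sq_centralBinom_div_four_pow (n : ℕ) :
    2 / (π * (2 * n + 1)) ≤ (centralBinom n / 4 ^ n : ℝ) ^ 2 := by
  have hW := Real.Wallis.W_le n
  have := n.centralBinom_pos
  rw [Real.Wallis.W_eq_centralBinom, div_le_iff₀ (by positivity)] at hW
  rw [div_le_iff₀ (by positivity)]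
  linarith

theorem sq_centralBinom_div_four_pow_le (n : ℕ) :
    (centralBinom n / 4 ^ n : ℝ) ^ 2 ≤ 4 * (n + 1) / (π * (2 * n + 1) ^ 2) := by
  have hW := Real.Wallis.le_W n
  have := n.centralBinom_pos
  rw [Real.Wallis.W_eq_centralBinom, le_div_iff₀ (by positivity)] at hW
  rw [div_pow, div_le_div_iff₀ (by positivity) (by positivity)]
  field_simp at hW
  linarith

theorem first_factor_eq (r : ℕ) (h : ℝ) :
    2 * (2 * r)! * Gamma (r + 3 / 2) ^ 2 / (Gamma (2 * r + 3 / 2) * h * √π * r ! ^ 2) =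
      (2 * r + 1) ^ 2 / (4 * r + 1) * (centralBinom r / 4 ^ r : ℝ) ^ 2 /
        (centralBinom (2 * r) / 4 ^ (2 * r)) / h := by
  have hr : Gamma (r + 3 / 2) = (r + 1 / 2) * (√π * r ! * (centralBinom r / 4 ^ r)) := by
    rw [show (r : ℝ) + 3 / 2 = r + 1 / 2 + 1 by ring, Gamma_add_one (by positivity),
      Gamma_nat_add_half_eq_centralBinom]
  have h2r : Gamma (2 * r + 3 / 2) =
      (2 * r + 1 / 2) * (√π * (2 * r)! * (centralBinom (2 * r) / 4 ^ (2 * r))) := by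
    rw [show 2 * (r : ℝ) + 3 / 2 = (2 * r : ℕ) + 1 / 2 + 1 by push_cast; ring,
      Gamma_add_one (by positivity), Gamma_nat_add_half_eq_centralBinom, Nat.cast_mul, Nat.cast_two]
  have := (2 * r).centralBinom_pos
  rw [hr, h2r]
  field_simp
  ring

theorem sqrt_two_mul_add_one_div_pi_le (n : ℕ) :
    √((2 * n + 1) / π) ≤ (2 * n + 1) ^ 2 / (4 * n + 1) * (centralBinom n / 4 ^ n : ℝ) ^ 2 /
        (centralBinom (2 * n) / 4 ^ (2 * n)) := by
  have hn := two_div_pi_mul_le_sq_centralBinom_div_four_pow n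
  have h2n := sq_centralBinom_div_four_pow_le (2 * n)
  have := (2 * n).centralBinom_pos
  push_cast at h2n
  rw [sqrt_le_left (by positivity)]
  calc (2 * n + 1) / π
      = ((2 * n + 1) ^ 2 / (4 * n + 1)) ^ 2 * (2 / (π * (2 * n + 1))) ^ 2 /
          (4 * (2 * n + 1) / (π * (2 * (2 * n) + 1) ^ 2)) := by
        field_simp; ring
    _ ≤ ((2 * n + 1) ^ 2 / (4 * n + 1)) ^ 2 * ((centralBinom n / 4 ^ n : ℝ) ^ 2) ^ 2 /
          (centralBinom (2 * n) / 4 ^ (2 * n) : ℝ) ^ 2 := by gcongr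
    _ = _ := by ring

theorem first_factor_lower_bound_general (r : ℕ) (h : ℝ) (hh : 0 < h) :
    Real.sqrt (2 / π) * Real.sqrt r / h <
      2 * (Nat.factorial (2 * r)) * Real.Gamma (r + 3 / 2) ^ 2 /
        (Real.Gamma (2 * r + 3 / 2) * h * Real.sqrt π * (Nat.factorial r) ^ 2) := by
  rw [first_factor_eq]
  gcongr
  calc √(2 / π) * √r = √(2 * r / π) := by rw [← sqrt_mul (by positivity)]; ring_nf
    _ < √((2 * r + 1) / π) := by gcongr; linarith
    _ ≤ _ := sqrt_two_mul_add_one_div_pi_le r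

theorem first_factor_lower_bound (r : ℕ) (hr : 1 ≤ r) (h b : ℝ) (hh : 0 < h) (hb : 0 < b) :
    Real.sqrt (2 / π) * Real.sqrt r / h <
      2 * (Nat.factorial (2 * r)) * Real.Gamma (r + 3 / 2) ^ 2 /
        (Real.Gamma (2 * r + 3 / 2) * h * Real.sqrt π * (Nat.factorial r) ^ 2) :=
  first_factor_lower_bound_general r h hh
end

section
/- Let Ω = (1/M)·{0,…,M−1}^d ⊂ 𝕋^d be the equispaced grid with q = 1/M and suppose N·q ≥ 1. Then the Vandermonde matrix A with entries e^{2πi ν·t_j}, ν ∈ {0,…,N−1}^d, satisfies σ_min(A) = N^{d/2}·(⌊Nq⌋/(Nq))^{d/2} and σ_max(A) = N^{d/2}·(⌈Nq⌉/(Nq))^{d/2}. -/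
/-!
With `ζ = e^{2πi/M}`, the entry `A j ν = ∏ₛ ζ^{jₛ νₛ}` depends on `ν` only through its residue
class `c = ν mod M`, so `A` is the `M^d × M^d` Fourier matrix `F` with columns repeated, and
`‖Aᴴ u‖² = ∑_c w_c |(Fᴴ u)_c|²`, where `w_c` counts the `ν ∈ {0,…,N-1}^d` reducing to `c`. Each
`w_c` is a product of `d` counts of residues in `[0, N)`, which lie between `⌊N/M⌋` (residue
`M - 1`) and `⌈N/M⌉` (residue `0`). As `F Fᴴ = Fᴴ F = M^d`, the form `∑_c w_c |(Fᴴ u)_c|²` ranges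
over `[M^d min w, M^d max w]` on unit vectors, the ends being attained at the columns of `F`.
-/

open Real Complex Matrix

/-- Smallest singular value of a rectangular matrix (with respect to rows). -/
noncomputable def sMin {m n : Type*} [Fintype m] [Fintype n] (A : Matrix m n ℂ) : ℝ :=
  sInf {r | ∃ u : m → ℂ, (∑ i, ‖u i‖ ^ 2) = 1 ∧
    r = Real.sqrt (∑ j, ‖Aᴴ.mulVec u j‖ ^ 2)}

/-- Largest singular value of a rectangular matrix. -/
noncomputable def sMax {m n : Type*} [Fintype m] [Fintype n] (A : Matrix m n ℂ) : ℝ :=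
  sSup {r | ∃ u : m → ℂ, (∑ i, ‖u i‖ ^ 2) = 1 ∧
    r = Real.sqrt (∑ j, ‖Aᴴ.mulVec u j‖ ^ 2)}

open Finset ComplexConjugate

section SingularValues

variable {m n : Type*} [Fintype m] [Fintype n]

theorem sMin_eq_sqrt {A : Matrix m n ℂ} {a : ℝ}
    (h_le : ∀ u : m → ℂ, ∑ i, ‖u i‖ ^ 2 = 1 → a ≤ ∑ j, ‖(Aᴴ *ᵥ u) j‖ ^ 2)
    (h_eq : ∃ u : m → ℂ, ∑ i, ‖u i‖ ^ 2 = 1 ∧ ∑ j, ‖(Aᴴ *ᵥ u) j‖ ^ 2 = a) :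
    sMin A = √a := by
  obtain ⟨u, hu, hua⟩ := h_eq
  refine IsLeast.csInf_eq ⟨⟨u, hu, by rw [hua]⟩, ?_⟩
  rintro _ ⟨v, hv, rfl⟩
  exact Real.sqrt_le_sqrt (h_le v hv)

theorem sMax_eq_sqrt {A : Matrix m n ℂ} {a : ℝ}
    (h_le : ∀ u : m → ℂ, ∑ i, ‖u i‖ ^ 2 = 1 → ∑ j, ‖(Aᴴ *ᵥ u) j‖ ^ 2 ≤ a)
    (h_eq : ∃ u : m → ℂ, ∑ i, ‖u i‖ ^ 2 = 1 ∧ ∑ j, ‖(Aᴴ *ᵥ u) j‖ ^ 2 = a) :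
    sMax A = √a := by
  obtain ⟨u, hu, hua⟩ := h_eq
  refine IsGreatest.csSup_eq ⟨⟨u, hu, by rw [hua]⟩, ?_⟩
  rintro _ ⟨v, hv, rfl⟩
  exact Real.sqrt_le_sqrt (h_le v hv)

theorem ofReal_sum_norm_sq (x : m → ℂ) : ((∑ i, ‖x i‖ ^ 2 : ℝ) : ℂ) = star x ⬝ᵥ x := by
  simp [dotProduct, Complex.conj_mul']

theorem sum_norm_sq_conjTranspose_submatrix_mulVec [DecidableEq m] (F : Matrix m m ℂ)
    (r : n → m) (u : m → ℂ) :
    ∑ ν, ‖((F.submatrix id r)ᴴ *ᵥ u) ν‖ ^ 2 =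
      ∑ c, (#{ν | r ν = c} : ℝ) * ‖(Fᴴ *ᵥ u) c‖ ^ 2 := by
  change ∑ ν, ‖(Fᴴ *ᵥ u) (r ν)‖ ^ 2 = _
  rw [← sum_fiberwise' univ r fun c ↦ ‖(Fᴴ *ᵥ u) c‖ ^ 2]
  simp only [sum_const, nsmul_eq_mul]

end SingularValues

section ScaledUnitary

variable {n : Type*} [Fintype n] [DecidableEq n] {B : Matrix n n ℂ} {κ : ℝ}

theorem sum_norm_sq_mulVec (hB : Bᴴ * B = κ • 1) (u : n → ℂ) :
    ∑ i, ‖(B *ᵥ u) i‖ ^ 2 = κ * ∑ i, ‖u i‖ ^ 2 := by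
  apply Complex.ofReal_injective
  rw [ofReal_sum_norm_sq, Matrix.star_mulVec, ← dotProduct_mulVec, mulVec_mulVec, hB,
    smul_mulVec, one_mulVec, dotProduct_smul, Complex.ofReal_mul, ofReal_sum_norm_sq,
    Complex.real_smul]

theorem sum_mul_norm_sq_single (w : n → ℝ) (c : n) (x : ℂ) :
    ∑ i, w i * ‖(Pi.single c x : n → ℂ) i‖ ^ 2 = w c * ‖x‖ ^ 2 := by
  simp [Pi.single_apply, apply_ite]

theorem exists_sum_mul_norm_sq_mulVec_eq (hB : B * Bᴴ = κ • 1) (hκ : 0 < κ) (w : n → ℝ)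
    (c : n) : ∃ u : n → ℂ, ∑ i, ‖u i‖ ^ 2 = 1 ∧ ∑ i, w i * ‖(B *ᵥ u) i‖ ^ 2 = w c * κ := by
  have hx : ‖(((√κ)⁻¹ : ℝ) : ℂ)‖ ^ 2 = κ⁻¹ := by
    rw [Complex.norm_real, norm_inv, Real.norm_of_nonneg (sqrt_nonneg _), inv_pow,
      sq_sqrt hκ.le]
  refine ⟨Bᴴ *ᵥ Pi.single c ((√κ)⁻¹ : ℝ), ?_, ?_⟩
  · rw [sum_norm_sq_mulVec (by rwa [conjTranspose_conjTranspose]), mul_sum,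
      sum_mul_norm_sq_single (fun _ ↦ κ), hx, mul_inv_cancel₀ hκ.ne']
  · rw [mulVec_mulVec, hB, smul_mulVec, one_mulVec, ← Pi.single_smul, sum_mul_norm_sq_single,
      norm_smul, mul_pow, hx, Real.norm_of_nonneg hκ.le]
    field_simp

theorem le_sum_mul_norm_sq_mulVec (hB : Bᴴ * B = κ • 1) {w : n → ℝ} {a : ℝ}
    (hw : ∀ i, a ≤ w i) {u : n → ℂ} (hu : ∑ i, ‖u i‖ ^ 2 = 1) :
    a * κ ≤ ∑ i, w i * ‖(B *ᵥ u) i‖ ^ 2 :=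
  calc a * κ = ∑ i, a * ‖(B *ᵥ u) i‖ ^ 2 := by
        rw [← mul_sum, sum_norm_sq_mulVec hB, hu, mul_one]
    _ ≤ _ := sum_le_sum fun i _ ↦ mul_le_mul_of_nonneg_right (hw i) (by positivity)

theorem sum_mul_norm_sq_mulVec_le (hB : Bᴴ * B = κ • 1) {w : n → ℝ} {a : ℝ}
    (hw : ∀ i, w i ≤ a) {u : n → ℂ} (hu : ∑ i, ‖u i‖ ^ 2 = 1) :
    ∑ i, w i * ‖(B *ᵥ u) i‖ ^ 2 ≤ a * κ :=
  calc ∑ i, w i * ‖(B *ᵥ u) i‖ ^ 2 ≤ ∑ i, a * ‖(B *ᵥ u) i‖ ^ 2 :=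
        sum_le_sum fun i _ ↦ mul_le_mul_of_nonneg_right (hw i) (by positivity)
    _ = a * κ := by rw [← mul_sum, sum_norm_sq_mulVec hB, hu, mul_one]

variable {m : Type*} [Fintype m] {A : Matrix n m ℂ} {F : Matrix n n ℂ} {w : n → ℝ}

theorem sMin_eq_sqrt_of_weighted (hκ : 0 < κ) (hF : F * Fᴴ = κ • 1) (hF' : Fᴴ * F = κ • 1)
    (hA : ∀ u, ∑ j, ‖(Aᴴ *ᵥ u) j‖ ^ 2 = ∑ i, w i * ‖(Fᴴ *ᵥ u) i‖ ^ 2) {c : n}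
    (hc : ∀ i, w c ≤ w i) : sMin A = √(w c * κ) := by
  refine sMin_eq_sqrt (fun u hu ↦ ?_) ?_
  · rw [hA]
    exact le_sum_mul_norm_sq_mulVec (by rwa [conjTranspose_conjTranspose]) hc hu
  · simpa only [hA] using
      exists_sum_mul_norm_sq_mulVec_eq (by rwa [conjTranspose_conjTranspose]) hκ w c

theorem sMax_eq_sqrt_of_weighted (hκ : 0 < κ) (hF : F * Fᴴ = κ • 1) (hF' : Fᴴ * F = κ • 1)
    (hA : ∀ u, ∑ j, ‖(Aᴴ *ᵥ u) j‖ ^ 2 = ∑ i, w i * ‖(Fᴴ *ᵥ u) i‖ ^ 2) {c : n}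
    (hc : ∀ i, w i ≤ w c) : sMax A = √(w c * κ) := by
  refine sMax_eq_sqrt (fun u hu ↦ ?_) ?_
  · rw [hA]
    exact sum_mul_norm_sq_mulVec_le (by rwa [conjTranspose_conjTranspose]) hc hu
  · simpa only [hA] using
      exists_sum_mul_norm_sq_mulVec_eq (by rwa [conjTranspose_conjTranspose]) hκ w c

end ScaledUnitary

theorem IsPrimitiveRoot.sum_pow_mul_conj {ζ : ℂ} {M : ℕ} (hζ : IsPrimitiveRoot ζ M)
    (b c : Fin M) :
    ∑ x : Fin M, ζ ^ ((x : ℕ) * b) * conj (ζ ^ ((x : ℕ) * c)) =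
      if b = c then (M : ℂ) else 0 := by
  have hζ₁ : ‖ζ‖ = 1 := hζ.norm'_eq_one b.pos.ne'
  set η := ζ ^ (b : ℕ) * (ζ ^ (c : ℕ))⁻¹
  have hη : ∀ x : ℕ, ζ ^ (x * b) * conj (ζ ^ (x * c)) = η ^ x := fun x ↦ by
    rw [← Complex.inv_eq_conj (by rw [norm_pow, hζ₁, one_pow]), mul_pow, inv_pow, ← pow_mul,
      ← pow_mul, mul_comm x, mul_comm x]
  rw [Fin.sum_univ_eq_sum_range (fun x ↦ ζ ^ (x * b) * conj (ζ ^ (x * c))) M]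
  simp_rw [hη]
  split_ifs with hbc
  · simp [η, hbc, hζ.ne_zero b.pos.ne']
  · have hη₁ : η ≠ 1 := by
      rw [Ne, mul_inv_eq_one₀ (pow_ne_zero _ (hζ.ne_zero b.pos.ne'))]
      exact fun h ↦ hbc (Fin.ext (hζ.pow_inj b.isLt c.isLt h))
    have hηM : η ^ M = 1 := by
      simp only [η, mul_pow, inv_pow, pow_right_comm _ _ M, hζ.pow_eq_one, one_pow, inv_one,
        mul_one]
    rw [geom_sum_eq hη₁, hηM, sub_self, zero_div]

def gridFourier (ζ : ℂ) (d M : ℕ) : Matrix (Fin d → Fin M) (Fin d → Fin M) ℂ :=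
  Matrix.of fun j c ↦ ∏ s, ζ ^ ((j s : ℕ) * c s)

namespace gridFourier

variable {ζ : ℂ} {d M : ℕ}

theorem apply_comm (j c : Fin d → Fin M) : gridFourier ζ d M j c = gridFourier ζ d M c j := by
  simp only [gridFourier, of_apply, mul_comm]

theorem sum_mul_conj (hζ : IsPrimitiveRoot ζ M) (b c : Fin d → Fin M) :
    ∑ j, gridFourier ζ d M b j * conj (gridFourier ζ d M c j) =
      if b = c then (M : ℂ) ^ d else 0 := by
  simp only [gridFourier, of_apply, map_prod, ← prod_mul_distrib]
  rw [← Fintype.prod_sum fun s (x : Fin M) ↦ ζ ^ ((b s : ℕ) * x) * conj (ζ ^ ((c s : ℕ) * x))]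
  simp_rw [mul_comm (b _ : ℕ), mul_comm (c _ : ℕ), hζ.sum_pow_mul_conj, prod_ite_zero,
    funext_iff]
  simp

theorem mul_conjTranspose (hζ : IsPrimitiveRoot ζ M) :
    gridFourier ζ d M * (gridFourier ζ d M)ᴴ = ((M : ℝ) ^ d) • 1 := by
  ext b c
  simp [mul_apply, sum_mul_conj hζ, one_apply]

theorem conjTranspose_mul (hζ : IsPrimitiveRoot ζ M) :
    (gridFourier ζ d M)ᴴ * gridFourier ζ d M = ((M : ℝ) ^ d) • 1 := by
  ext b c
  simp only [mul_apply, conjTranspose_apply, apply_comm _ b, apply_comm _ c, RCLike.star_def,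
    mul_comm (conj _), sum_mul_conj hζ]
  simp [one_apply, eq_comm]

end gridFourier

namespace Nat

variable {M : ℕ}

theorem div_le_count_modEq (N : ℕ) (hM : 0 < M) (v : ℕ) :
    N / M ≤ N.count (· ≡ v [MOD M]) := by
  rw [count_modEq_card N hM]
  omega

theorem count_modEq_pred (N : ℕ) (hM : 0 < M) : N.count (· ≡ M - 1 [MOD M]) = N / M := by
  rw [count_modEq_card N hM, Nat.mod_eq_of_lt (by omega : M - 1 < M)]
  have := Nat.mod_lt N hM
  split_ifs <;> omega

theorem count_modEq_zero (N : ℕ) (hM : 0 < M) : N.count (· ≡ 0 [MOD M]) = N ⌈/⌉ M := by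
  rw [count_modEq_card N hM, Nat.zero_mod, ceilDiv_eq_add_pred_div, Nat.add_sub_assoc hM,
    Nat.add_div hM, Nat.div_eq_of_lt (by omega : M - 1 < M),
    Nat.mod_eq_of_lt (by omega : M - 1 < M)]
  split_ifs <;> omega

theorem count_modEq_le_ceilDiv (N : ℕ) (hM : 0 < M) (v : ℕ) :
    N.count (· ≡ v [MOD M]) ≤ N ⌈/⌉ M := by
  rw [← count_modEq_zero N hM, count_modEq_card N hM, count_modEq_card N hM, Nat.zero_mod]
  split_ifs <;> omega

theorem ceil_natCast_div_natCast (N : ℕ) (hM : 0 < M) : ⌈(N : ℝ) / M⌉₊ = N ⌈/⌉ M :=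
  eq_of_forall_ge_iff fun k ↦ by
    rw [ceil_le, div_le_iff₀ (by positivity), ceilDiv_le_iff_le_mul hM, mul_comm]
    exact_mod_cast Iff.rfl

end Nat

def residueClass (M : ℕ) [NeZero M] {d N : ℕ} (ν : Fin d → Fin N) : Fin d → Fin M :=
  fun s ↦ Fin.ofNat M (ν s)

section Equispaced

variable {d M N : ℕ} [NeZero M]

def IsEquispacedVandermonde (A : Matrix (Fin d → Fin M) (Fin d → Fin N) ℂ) : Prop :=
  ∀ j ν, A j ν = Complex.exp (2 * π * I * ((∑ s, (ν s : ℝ) * ((j s : ℝ) / M) : ℝ) : ℂ))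

theorem card_fiber_residueClass (c : Fin d → Fin M) :
    #{ν : Fin d → Fin N | residueClass M ν = c} = ∏ s, N.count (· ≡ c s [MOD M]) := by
  have hfib : ({ν : Fin d → Fin N | residueClass M ν = c} : Finset _) =
      Fintype.piFinset fun s ↦ {x : Fin N | Fin.ofNat M x = c s} := by
    ext ν
    simp [residueClass, funext_iff]
  rw [hfib, Fintype.card_piFinset]
  refine prod_congr rfl fun s _ ↦ ?_
  rw [Nat.count_eq_card_filter_range, card_filter, card_filter,
    ← Fin.sum_univ_eq_sum_range (fun x ↦ if x ≡ c s [MOD M] then 1 else 0)]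
  simp [Fin.ext_iff, Nat.ModEq, Nat.mod_eq_of_lt (c s).isLt]

theorem IsEquispacedVandermonde.eq_submatrix_gridFourier
    {A : Matrix (Fin d → Fin M) (Fin d → Fin N) ℂ} (hA : IsEquispacedVandermonde A) :
    A = (gridFourier (Complex.exp (2 * π * I / M)) d M).submatrix id (residueClass M) := by
  have hζ := Complex.isPrimitiveRoot_exp M (NeZero.ne M)
  ext j ν
  have harg : 2 * π * I * ((∑ s, (ν s : ℝ) * ((j s : ℝ) / M) : ℝ) : ℂ) =
      ∑ s, ((j s * ν s : ℕ) : ℂ) * (2 * π * I / M) := by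
    push_cast
    rw [mul_sum]
    exact sum_congr rfl fun s _ ↦ by ring
  rw [hA, harg, Complex.exp_sum]
  refine prod_congr rfl fun s _ ↦ ?_
  rw [Complex.exp_nat_mul, id, residueClass, Fin.val_ofNat, pow_mul, pow_mul]
  exact pow_eq_pow_mod _ (by rw [pow_right_comm, hζ.pow_eq_one, one_pow])

theorem pow_div_le_card_fiber_residueClass (c : Fin d → Fin M) :
    (N / M) ^ d ≤ #{ν : Fin d → Fin N | residueClass M ν = c} := by
  rw [card_fiber_residueClass]
  simpa using pow_card_le_prod univ _ _ fun s _ ↦ Nat.div_le_count_modEq N (NeZero.pos M) (c s)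

theorem card_fiber_residueClass_le_pow (c : Fin d → Fin M) :
    #{ν : Fin d → Fin N | residueClass M ν = c} ≤ (N ⌈/⌉ M) ^ d := by
  rw [card_fiber_residueClass]
  simpa using
    prod_le_pow_card univ _ _ fun s _ ↦ Nat.count_modEq_le_ceilDiv N (NeZero.pos M) (c s)

theorem card_fiber_residueClass_pred :
    #{ν : Fin d → Fin N | residueClass M ν = fun _ ↦ ⟨M - 1, by have := NeZero.pos M; omega⟩} =
      (N / M) ^ d := by
  simp [card_fiber_residueClass, Nat.count_modEq_pred N (NeZero.pos M)]

theorem card_fiber_residueClass_zero :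
    #{ν : Fin d → Fin N | residueClass M ν = fun _ ↦ ⟨0, NeZero.pos M⟩} = (N ⌈/⌉ M) ^ d := by
  rw [card_fiber_residueClass, prod_const, card_univ, Fintype.card_fin,
    ← Nat.count_modEq_zero N (NeZero.pos M)]

theorem IsEquispacedVandermonde.sum_norm_sq_conjTranspose_mulVec
    {A : Matrix (Fin d → Fin M) (Fin d → Fin N) ℂ} (hA : IsEquispacedVandermonde A)
    (u : (Fin d → Fin M) → ℂ) :
    ∑ ν, ‖(Aᴴ *ᵥ u) ν‖ ^ 2 =
      ∑ c, (#{ν : Fin d → Fin N | residueClass M ν = c} : ℝ) *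
        ‖((gridFourier (Complex.exp (2 * π * I / M)) d M)ᴴ *ᵥ u) c‖ ^ 2 := by
  rw [hA.eq_submatrix_gridFourier, sum_norm_sq_conjTranspose_submatrix_mulVec]

variable {A : Matrix (Fin d → Fin M) (Fin d → Fin N) ℂ}

theorem IsEquispacedVandermonde.sMin_eq (hA : IsEquispacedVandermonde A) :
    sMin A = √((((N / M : ℕ) : ℝ) * M) ^ d) := by
  have hζ := Complex.isPrimitiveRoot_exp M (NeZero.ne M)
  rw [sMin_eq_sqrt_of_weighted (pow_pos (Nat.cast_pos.mpr (NeZero.pos M)) d)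
    (gridFourier.mul_conjTranspose hζ) (gridFourier.conjTranspose_mul hζ)
    hA.sum_norm_sq_conjTranspose_mulVec
    (c := fun _ ↦ ⟨M - 1, by have := NeZero.pos M; omega⟩) fun c ↦ by
      exact_mod_cast
        card_fiber_residueClass_pred.trans_le (pow_div_le_card_fiber_residueClass c),
    card_fiber_residueClass_pred, Nat.cast_pow, mul_pow]

theorem IsEquispacedVandermonde.sMax_eq (hA : IsEquispacedVandermonde A) :
    sMax A = √((((N ⌈/⌉ M : ℕ) : ℝ) * M) ^ d) := by
  have hζ := Complex.isPrimitiveRoot_exp M (NeZero.ne M)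
  rw [sMax_eq_sqrt_of_weighted (pow_pos (Nat.cast_pos.mpr (NeZero.pos M)) d)
    (gridFourier.mul_conjTranspose hζ) (gridFourier.conjTranspose_mul hζ)
    hA.sum_norm_sq_conjTranspose_mulVec
    (c := fun _ ↦ ⟨0, NeZero.pos M⟩) fun c ↦ by
      exact_mod_cast
        (card_fiber_residueClass_le_pow c).trans_eq card_fiber_residueClass_zero.symm,
    card_fiber_residueClass_zero, Nat.cast_pow, mul_pow]

end Equispaced

theorem sqrt_pow_eq_rpow_mul_rpow {N M X : ℝ} (hN : 0 < N) (hM : 0 < M) (hX : 0 ≤ X) (d : ℕ) :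
    √((X * M) ^ d) = N ^ ((d : ℝ) / 2) * (X / (N / M)) ^ ((d : ℝ) / 2) := by
  rw [Real.sqrt_eq_rpow, ← Real.rpow_natCast, ← Real.rpow_mul (by positivity),
    ← Real.mul_rpow hN.le (by positivity), show N * (X / (N / M)) = X * M by field_simp]
  ring_nf

theorem equispaced_singular_values_general (d M N : ℕ) (hM : 1 ≤ M)
    (q : ℝ) (hq : q = 1 / M) (hNq : 1 ≤ (N : ℝ) * q)
    (A : Matrix (Fin d → Fin M) (Fin d → Fin N) ℂ)
    (hA : ∀ j ν, A j ν =
      Complex.exp (2 * π * Complex.I * ((∑ s, (ν s : ℝ) * ((j s : ℝ) / M) : ℝ) : ℂ))) :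
    sMin A = (N : ℝ) ^ ((d : ℝ) / 2) *
        ((⌊(N : ℝ) * q⌋₊ : ℝ) / ((N : ℝ) * q)) ^ ((d : ℝ) / 2) ∧
    sMax A = (N : ℝ) ^ ((d : ℝ) / 2) *
        ((⌈(N : ℝ) * q⌉₊ : ℝ) / ((N : ℝ) * q)) ^ ((d : ℝ) / 2) := by
  have : NeZero M := ⟨by omega⟩
  have hMpos : (0 : ℝ) < M := by exact_mod_cast NeZero.pos M
  have hNq' : (N : ℝ) * q = N / M := by rw [hq, mul_one_div]
  have hNpos : (0 : ℝ) < N :=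
    Nat.cast_pos.mpr <| Nat.pos_of_ne_zero fun h ↦ by norm_num [h] at hNq
  rw [hNq', Nat.floor_div_eq_div, Nat.ceil_natCast_div_natCast N (NeZero.pos M),
    IsEquispacedVandermonde.sMin_eq hA, IsEquispacedVandermonde.sMax_eq hA]
  exact ⟨sqrt_pow_eq_rpow_mul_rpow hNpos hMpos (by positivity) d,
    sqrt_pow_eq_rpow_mul_rpow hNpos hMpos (by positivity) d⟩

theorem equispaced_singular_values (d M N : ℕ) (hd : 1 ≤ d) (hM : 1 ≤ M)
    (q : ℝ) (hq : q = 1 / M) (hNq : 1 ≤ (N : ℝ) * q)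
    (A : Matrix (Fin d → Fin M) (Fin d → Fin N) ℂ)
    (hA : ∀ j ν, A j ν =
      Complex.exp (2 * π * Complex.I * ((∑ s, (ν s : ℝ) * ((j s : ℝ) / M) : ℝ) : ℂ))) :
    sMin A = (N : ℝ) ^ ((d : ℝ) / 2) *
        ((⌊(N : ℝ) * q⌋₊ : ℝ) / ((N : ℝ) * q)) ^ ((d : ℝ) / 2) ∧
    sMax A = (N : ℝ) ^ ((d : ℝ) / 2) *
        ((⌈(N : ℝ) * q⌉₊ : ℝ) / ((N : ℝ) * q)) ^ ((d : ℝ) / 2) :=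
  equispaced_singular_values_general d M N hM q hq hNq A hA
end
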